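/- Two-test scenario separating causal likelihood from any spectrum-based heuristic: consider the coverage matrix with units u₁,u₂,u₃ and tests t₁,t₂ where t₁ executes u₁,u₂ and fails, and t₂ executes only u₃ and fails. Then P(H₃|u₃) = 1 and P(H₂|u₂) = 1/3, so P(H₃|u₃) > P(H₂|u₂), even though units u₂ and u₃ have identical spectra ⟨c_ef, c_nf, c_ep, c_np⟩ = ⟨1,1,0,0⟩, hence any function of the spectrum assigns them equal scores. -/
import Mathlib

def c17 : Fin 3 → Fin 2 → ℕ := fun i k =>
  if k = 0 then (if i = 2 then 0 else 1) else (if i = 2 then 1 else 0)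
def e17 : Fin 2 → ℕ := fun _ => 1
def ρ17 (k : Fin 2) : ℕ := ∑ j, c17 j k
noncomputable def CL17 (i : Fin 3) : ℝ :=
  (∑ k, ((c17 i k * e17 k : ℕ) : ℝ) / ((2 : ℝ) ^ (ρ17 k) - 1)) /
    (∑ k, (c17 i k : ℝ))
def spec17 (i : Fin 3) : ℕ × ℕ × ℕ × ℕ :=
  (∑ k, c17 i k * e17 k, ∑ k, (1 - c17 i k) * e17 k,
   ∑ k, c17 i k * (1 - e17 k), ∑ k, (1 - c17 i k) * (1 - e17 k))
/-- Causal likelihood separates u₃ from u₂ (P(H₃|u₃) = 1 > 1/3 = P(H₂|u₂))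
even though their spectra are identical (⟨1,1,0,0⟩), so every spectrum-based
heuristic scores them equally. -/
theorem stmt_17 :
    CL17 2 = 1 ∧ CL17 1 = 1 / 3 ∧ CL17 2 > CL17 1 ∧
    spec17 1 = spec17 2 ∧ spec17 1 = (1, 1, 0, 0) ∧
    ∀ s : ℕ × ℕ × ℕ × ℕ → ℝ, s (spec17 1) = s (spec17 2) := by
  have h1 : CL17 2 = 1 := by
    simp [CL17, c17, e17, ρ17, Fin.sum_univ_succ]; norm_num
  have h2 : CL17 1 = 1/3 := by
    simp [CL17, c17, e17, ρ17, Fin.sum_univ_succ]; norm_num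
  have hs : spec17 1 = spec17 2 := by decide
  refine ⟨h1, h2, by rw [h1, h2]; norm_num, hs, by decide, fun s => by rw [hs]⟩
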